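/- For z a positive definite r×r real symmetric matrix, the determinant of the linear map y ↦ z^{1/2} y z^{1/2} on the space Sym(r,ℝ) equals (det z)^{(r+1)/2}; in particular, with n = r(r+1)/2, it equals (det z)^{n/r}. -/

import Mathlib

open Matrix
open scoped Classical

/-- The space `Sym(r,ℝ)` of symmetric matrices, as a submodule of the matrices. -/
def SymMat (r : ℕ) : Submodule ℝ (Matrix (Fin r) (Fin r) ℝ) where
  carrier := {A | A.IsSymm}
  add_mem' ha hb := ha.add hb
  zero_mem' := Matrix.isSymm_zero
  smul_mem' c A hA := hA.smul c

/-- The square root of a positive semidefinite matrix (junk value `0` otherwise). -/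
noncomputable def msqrt {r : ℕ} (A : Matrix (Fin r) (Fin r) ℝ) : Matrix (Fin r) (Fin r) ℝ :=
  if h : A.PosSemidef then
    (h.1.eigenvectorUnitary : Matrix (Fin r) (Fin r) ℝ) *
      diagonal ((↑) ∘ (√·) ∘ h.1.eigenvalues) *
      (star h.1.eigenvectorUnitary : Matrix (Fin r) (Fin r) ℝ)
  else 0

lemma msqrt_isSymm {r : ℕ} (A : Matrix (Fin r) (Fin r) ℝ) : (msqrt A).IsSymm := by
  unfold msqrt
  split
  · rename_i h
    show (_ * _ * _)ᵀ = _
    rw [Matrix.transpose_mul, Matrix.transpose_mul, Matrix.diagonal_transpose, Matrix.mul_assoc]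
    simp [Matrix.star_eq_conjTranspose]
  · exact Matrix.isSymm_zero

lemma congr_isSymm {r : ℕ} {s v : Matrix (Fin r) (Fin r) ℝ} (hs : s.IsSymm) (hv : v.IsSymm) :
    (s * v * s).IsSymm := by
  show (s * v * s)ᵀ = s * v * s
  rw [Matrix.transpose_mul, Matrix.transpose_mul, hs.eq, hv.eq, Matrix.mul_assoc]

/-- The linear endomorphism `y ↦ z^{1/2} y z^{1/2}` of `Sym(r,ℝ)`. -/
noncomputable def congrSqrtMap (r : ℕ) (z : Matrix (Fin r) (Fin r) ℝ) :
    SymMat r →ₗ[ℝ] SymMat r where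
  toFun y := ⟨msqrt z * (y : Matrix (Fin r) (Fin r) ℝ) * msqrt z,
    congr_isSymm (msqrt_isSymm z) y.2⟩
  map_add' y₁ y₂ := by
    apply Subtype.ext
    simp [Matrix.mul_add, Matrix.add_mul]
  map_smul' c y := by
    apply Subtype.ext
    simp [Matrix.mul_smul, Matrix.smul_mul]

/-!
Write `C a` for the congruence `y ↦ a y aᵀ` on `Sym(r,ℝ)`; `a ↦ det (C a)` is multiplicative.
For symmetric `s = U D Uᵀ` with `U` orthogonal this gives `det (C s) = det (C D)`, and in the
coordinates `y i j, i ≤ j`, the map `C D` is diagonal with entries `d i * d j`. Each `d k` occurs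
in exactly `r + 1` of these products, so `det (C s) = (det s) ^ (r + 1)`. Applied to the
symmetric matrix `z^{1/2}`, whose determinant is `√(det z)`, this gives `(det z) ^ ((r + 1) / 2)`.
-/
open Finset

theorem Finset.card_filter_le_add_card_filter_ge {ι : Type*} [Fintype ι] [LinearOrder ι] (i : ι) :
    #{j | i ≤ j} + #{j | j ≤ i} = Fintype.card ι + 1 := by
  rw [← card_union_add_card_inter, ← filter_or, ← filter_and]
  simp_rw [← le_antisymm_iff]
  simp [le_total, filter_eq]

theorem Fintype.prod_le_pairs_mul_eq_pow {ι M : Type*} [Fintype ι] [LinearOrder ι] [CommMonoid M]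
    (d : ι → M) :
    ∏ p : {p : ι × ι // p.1 ≤ p.2}, d p.1.1 * d p.1.2 = (∏ i, d i) ^ (Fintype.card ι + 1) := by
  rw [← prod_subtype ({p | p.1 ≤ p.2} : Finset (ι × ι)) (by simp) (fun p => d p.1 * d p.2),
    prod_mul_distrib, prod_filter, prod_filter, Fintype.prod_prod_type, Fintype.prod_prod_type_right]
  simp only [prod_ite, prod_const_one, mul_one, prod_const, ← prod_mul_distrib, ← pow_add]
  simp_rw [card_filter_le_add_card_filter_ge, prod_pow]

namespace SymMat

variable {r : ℕ}

noncomputable def congrMap (r : ℕ) : Matrix (Fin r) (Fin r) ℝ →* Module.End ℝ (SymMat r) where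
  toFun a :=
    { toFun y := ⟨a * y * aᵀ, by
        simp [SymMat, IsSymm, Matrix.transpose_mul, y.2.eq, Matrix.mul_assoc]⟩
      map_add' _ _ := by ext1; simp [Matrix.mul_add, Matrix.add_mul]
      map_smul' _ _ := by ext1; simp }
  map_one' := by ext1; simp
  map_mul' a b := by ext1 y; simp [Matrix.mul_assoc]

@[simp]
theorem coe_congrMap_apply (a : Matrix (Fin r) (Fin r) ℝ) (y : SymMat r) :
    (congrMap r a y : Matrix (Fin r) (Fin r) ℝ) = a * y * aᵀ := rfl

abbrev UpperIdx (r : ℕ) := {p : Fin r × Fin r // p.1 ≤ p.2}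

noncomputable def upperCoords (r : ℕ) : SymMat r ≃ₗ[ℝ] (UpperIdx r → ℝ) where
  toFun A p := (A : Matrix (Fin r) (Fin r) ℝ) p.1.1 p.1.2
  invFun v := ⟨Matrix.of fun i j =>
      if h : i ≤ j then v ⟨(i, j), h⟩ else v ⟨(j, i), le_of_not_ge h⟩, by
    refine IsSymm.ext fun i j => ?_
    rcases lt_trichotomy i j with h | rfl | h
    · simp [h.le, not_le.2 h]
    · rfl
    · simp [h.le, not_le.2 h]⟩
  map_add' _ _ := rfl
  map_smul' _ _ := rfl
  left_inv A := by
    ext i j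
    by_cases h : i ≤ j
    · simp [h]
    · simp [A.2.apply]
  right_inv v := by ext p; simp [p.2]

theorem upperCoords_apply (A : SymMat r) (p : UpperIdx r) :
    upperCoords r A p = (A : Matrix (Fin r) (Fin r) ℝ) p.1.1 p.1.2 := rfl

theorem upperCoords_symm_apply_of_le (v : UpperIdx r → ℝ) {i j : Fin r} (h : i ≤ j) :
    ((upperCoords r).symm v : Matrix (Fin r) (Fin r) ℝ) i j = v ⟨(i, j), h⟩ := dif_pos h

theorem upperCoords_conj_congrMap_diagonal (d : Fin r → ℝ) :
    (upperCoords r : SymMat r →ₗ[ℝ] _) ∘ₗ congrMap r (diagonal d) ∘ₗ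
        ((upperCoords r).symm : _ →ₗ[ℝ] SymMat r) =
      Matrix.toLin' (diagonal fun p : UpperIdx r => d p.1.1 * d p.1.2) := by
  refine LinearMap.ext fun v => funext fun p => ?_
  simp [upperCoords_apply, upperCoords_symm_apply_of_le _ p.2, mulVec_diagonal]
  ring

theorem det_congrMap_diagonal (d : Fin r → ℝ) :
    LinearMap.det (congrMap r (diagonal d)) = ∏ p : UpperIdx r, d p.1.1 * d p.1.2 := by
  rw [← LinearMap.det_conj _ (upperCoords r), upperCoords_conj_congrMap_diagonal,
    LinearMap.det_toLin', det_diagonal]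

theorem det_congrMap_of_isHermitian {s : Matrix (Fin r) (Fin r) ℝ} (hs : s.IsHermitian) :
    LinearMap.det (congrMap r s) = s.det ^ (r + 1) := by
  set U := (hs.eigenvectorUnitary : Matrix (Fin r) (Fin r) ℝ)
  have hspec : s = U * diagonal hs.eigenvalues * Uᵀ := by
    rw [← conjTranspose_eq_transpose_of_trivial, ← star_eq_conjTranspose]
    simpa using hs.spectral_theorem
  have hU : Uᵀ * U = 1 := by
    rw [← conjTranspose_eq_transpose_of_trivial, ← star_eq_conjTranspose]
    exact Unitary.star_mul_self_of_mem hs.eigenvectorUnitary.2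
  calc LinearMap.det (congrMap r s)
      = LinearMap.det (congrMap r (U * diagonal hs.eigenvalues * Uᵀ)) :=
        congrArg (fun a => LinearMap.det (congrMap r a)) hspec
    _ = LinearMap.det (congrMap r (Uᵀ * U)) *
          LinearMap.det (congrMap r (diagonal hs.eigenvalues)) := by
        simp only [map_mul]; ring
    _ = (∏ i, hs.eigenvalues i) ^ (r + 1) := by
        rw [hU, map_one, map_one, one_mul, det_congrMap_diagonal,
          Fintype.prod_le_pairs_mul_eq_pow, Fintype.card_fin]
    _ = s.det ^ (r + 1) := by rw [hs.det_eq_prod_eigenvalues]; simp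

end SymMat

open scoped MatrixOrder in
theorem msqrt_eq_cfcSqrt {r : ℕ} {A : Matrix (Fin r) (Fin r) ℝ} (hA : A.PosSemidef) :
    msqrt A = CFC.sqrt A := by
  rw [CFC.sqrt_eq_cfc, cfc_nnreal_eq_real _ A, hA.1.cfc_eq, msqrt, dif_pos hA]
  simp [IsHermitian.cfc, Function.comp_def, hA.eigenvalues_nonneg]

theorem det_msqrt {r : ℕ} {A : Matrix (Fin r) (Fin r) ℝ} (hA : A.PosSemidef) :
    (msqrt A).det = √A.det := by
  rw [msqrt_eq_cfcSqrt hA, hA.det_sqrt, RCLike.sqrt_real]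

theorem congrSqrtMap_eq_congrMap (r : ℕ) (z : Matrix (Fin r) (Fin r) ℝ) :
    congrSqrtMap r z = SymMat.congrMap r (msqrt z) := by
  ext1 y
  ext1
  simp [congrSqrtMap, (msqrt_isSymm z).eq]

/-- The determinant of `y ↦ z^{1/2} y z^{1/2}` on `Sym(r,ℝ)` is `(det z)^{(r+1)/2}`,
i.e. `(det z)^{n/r}` with `n = r(r+1)/2`. -/
theorem det_congrSqrtMap (r : ℕ) (z : Matrix (Fin r) (Fin r) ℝ) (hz : z.PosDef) :
    LinearMap.det (congrSqrtMap r z) = z.det ^ (((r:ℝ) + 1) / 2) ∧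
    LinearMap.det (congrSqrtMap r z) = z.det ^ (((r * (r + 1) / 2 : ℕ) : ℝ) / (r : ℝ)) := by
  have hdet : LinearMap.det (congrSqrtMap r z) = z.det ^ (((r:ℝ) + 1) / 2) := by
    rw [congrSqrtMap_eq_congrMap, SymMat.det_congrMap_of_isHermitian
      (isHermitian_iff_isSymm.2 (msqrt_isSymm z)), det_msqrt hz.posSemidef,
      Real.sqrt_eq_rpow, ← Real.rpow_natCast, ← Real.rpow_mul hz.det_pos.le]
    congr 1
    push_cast
    ring
  refine ⟨hdet, hdet.trans ?_⟩
  rcases r.eq_zero_or_pos with rfl | hr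
  · simp
  · have hr' : (r : ℝ) ≠ 0 := by positivity
    rw [Nat.cast_div (Nat.even_mul_succ_self r).two_dvd two_ne_zero]
    push_cast
    field_simp
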